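/- Let a, b₁, b₂, c ∈ ℂ with Re c > Re a > 0, and let x, y ∈ ℂ with |x| < 1 and |y| < 1. Then the first Appell hypergeometric series equals the Euler integral: ∑_{k=0}^∞ ∑_{l=0}^∞ ((a)_{k+l} (b₁)_k (b₂)_l)/((c)_{k+l} · k! · l!) · x^k y^l = (Γ(c)/(Γ(a)·Γ(c−a))) · ∫₀¹ t^{a−1} (1−t)^{c−a−1} (1−xt)^{−b₁} (1−yt)^{−b₂} dt, where all powers are principal-branch complex powers and Γ is the complex Gamma function. -/

import Mathlib

/-!
Expand `(1 - x t)^(-b₁) (1 - y t)^(-b₂)` by the binomial series `(1 - z)^(-b) = ∑ (b)_k z^k / k!`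
and integrate termwise against the Beta kernel `t^(a-1) (1-t)^(c-a-1)`; this is legitimate because
for `0 < t ≤ 1` the double series is dominated by the absolutely convergent series at `t = 1`.
The `(k, l)` term then becomes a Beta integral `B(a + k + l, c - a)`, and
`Γ(c) / (Γ(a) Γ(c - a)) · B(a + n, c - a) = (a)_n / (c)_n` by `Γ(z + n) = (z)_n Γ(z)`.
-/

open Complex Polynomial MeasureTheory Set

noncomputable def binomialTerm (b z : ℂ) (k : ℕ) : ℂ :=
  (ascPochhammer ℂ k).eval b * z ^ k / k.factorial

-- `choose (-b) k = (-1)^k multichoose b k` and `k! multichoose b k = (b)_k`.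
lemma binomialSeries_neg_apply_neg (b z : ℂ) (k : ℕ) :
    binomialSeries ℂ (-b) k (fun _ => -z) = binomialTerm b z k := by
  rw [binomialTerm, binomialSeries_apply, Ring.choose_neg', List.ofFn_const, List.prod_replicate,
    smul_eq_mul, Units.smul_def, zsmul_eq_mul, Int.cast_negOnePow_natCast,
    ← ascPochhammer_smeval_eq_eval, ← Ring.factorial_nsmul_multichoose_eq_ascPochhammer,
    nsmul_eq_mul, neg_pow z, ← mul_assoc, mul_assoc _ _ ((-1 : ℂ) ^ k),
    mul_comm _ ((-1 : ℂ) ^ k), ← mul_assoc, ← mul_pow]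
  norm_num
  rw [mul_assoc, mul_div_cancel_left₀ _ (Nat.cast_ne_zero.mpr k.factorial_ne_zero)]

lemma binomialTerm_mul (b z w : ℂ) (k : ℕ) :
    binomialTerm b (z * w) k = binomialTerm b z k * w ^ k := by
  simp only [binomialTerm, mul_pow]
  ring

lemma neg_mem_eball_one {z : ℂ} (hz : ‖z‖ < 1) : -z ∈ Metric.eball (0 : ℂ) 1 := by
  rwa [mem_eball_zero_iff, enorm_neg, ← ofReal_norm, ENNReal.ofReal_lt_one]

theorem hasSum_binomialTerm (b : ℂ) {z : ℂ} (hz : ‖z‖ < 1) :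
    HasSum (binomialTerm b z) ((1 - z) ^ (-b)) := by
  simpa only [binomialSeries_neg_apply_neg, zero_sub, ← sub_eq_add_neg] using
    (one_add_cpow_hasFPowerSeriesOnBall_zero (a := -b)).hasSum (neg_mem_eball_one hz)

theorem summable_norm_binomialTerm (b : ℂ) {z : ℂ} (hz : ‖z‖ < 1) :
    Summable fun k => ‖binomialTerm b z k‖ := by
  simpa only [binomialSeries_neg_apply_neg] using (binomialSeries ℂ (-b)).summable_norm_apply
    (Metric.eball_subset_eball binomialSeries_radius_ge_one (neg_mem_eball_one hz))

theorem hasSum_binomialTerm_mul_binomialTerm (b₁ b₂ : ℂ) {z w : ℂ} (hz : ‖z‖ < 1)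
    (hw : ‖w‖ < 1) :
    HasSum (fun p : ℕ × ℕ => binomialTerm b₁ z p.1 * binomialTerm b₂ w p.2)
      ((1 - z) ^ (-b₁) * (1 - w) ^ (-b₂)) :=
  (hasSum_binomialTerm b₁ hz).mul (hasSum_binomialTerm b₂ hw)
    (summable_mul_of_summable_norm (summable_norm_binomialTerm b₁ hz)
      (summable_norm_binomialTerm b₂ hw))

lemma ne_neg_natCast_of_re_pos {z : ℂ} (hz : 0 < z.re) (k : ℕ) : z ≠ -k := by
  rintro rfl
  simp only [neg_re, natCast_re, Left.neg_pos_iff] at hz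
  exact (Nat.cast_nonneg k).not_gt hz

theorem ascPochhammer_eval_div_eq_betaIntegral {a c : ℂ} (ha : 0 < a.re) (hca : a.re < c.re)
    (n : ℕ) :
    (ascPochhammer ℂ n).eval a / (ascPochhammer ℂ n).eval c =
      Gamma c / (Gamma a * Gamma (c - a)) * betaIntegral (a + n) (c - a) := by
  have hc : 0 < c.re := ha.trans hca
  have hca' : 0 < (c - a).re := by simpa using hca
  have hre : ∀ z : ℂ, 0 < z.re → 0 < (z + n).re := fun z hz => by
    simp only [add_re, natCast_re]; positivity
  have hbeta := Gamma_mul_Gamma_eq_betaIntegral (hre a ha) hca'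
  rw [show a + n + (c - a) = c + n by ring] at hbeta
  rw [← Gamma_add_nat_div_Gamma_eq a (ne_neg_natCast_of_re_pos ha),
    ← Gamma_add_nat_div_Gamma_eq c (ne_neg_natCast_of_re_pos hc)]
  have hΓa := Gamma_ne_zero_of_re_pos ha
  have hΓc := Gamma_ne_zero_of_re_pos hc
  have hΓca := Gamma_ne_zero_of_re_pos hca'
  have hΓcn := Gamma_ne_zero_of_re_pos (hre c hc)
  field_simp
  linear_combination hbeta

theorem betaIntegral_add_nat (u v : ℂ) (n : ℕ) :
    betaIntegral (u + n) v =
      ∫ t in Ioc (0 : ℝ) 1, (t : ℂ) ^ n * ((t : ℂ) ^ (u - 1) * (1 - (t : ℂ)) ^ (v - 1)) := by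
  rw [betaIntegral, intervalIntegral.integral_of_le zero_le_one]
  refine setIntegral_congr_fun measurableSet_Ioc fun t ht => ?_
  have ht0 : (t : ℂ) ≠ 0 := ofReal_ne_zero.mpr ht.1.ne'
  rw [show u + n - 1 = n + (u - 1) by ring, cpow_add _ _ ht0, cpow_natCast, mul_assoc]

theorem hasSum_mul_integral_of_norm_le_one {α ι 𝕜 : Type*} [MeasurableSpace α] [Countable ι]
    [RCLike 𝕜] {μ : Measure α} {K : α → 𝕜} (hK : Integrable K μ) {g : ι → α → 𝕜}
    (hg : ∀ i, AEStronglyMeasurable (g i) μ) (hg_le : ∀ i, ∀ᵐ t ∂μ, ‖g i t‖ ≤ 1) {f : ι → 𝕜}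
    (hf : Summable fun i => ‖f i‖) :
    HasSum (fun i => f i * ∫ t, g i t * K t ∂μ) (∫ t, (∑' i, f i * g i t) * K t ∂μ) := by
  have hgK : ∀ i, Integrable (fun t => g i t * K t) μ := fun i => hK.bdd_mul (hg i) (hg_le i)
  have hnorm_le : ∀ i, ∫ t, ‖f i * (g i t * K t)‖ ∂μ ≤ ‖f i‖ * ∫ t, ‖K t‖ ∂μ := fun i => by
    simp only [norm_mul (f i), integral_const_mul]
    refine mul_le_mul_of_nonneg_left (integral_mono_ae (hgK i).norm hK.norm ?_) (norm_nonneg _)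
    filter_upwards [hg_le i] with t ht
    simpa only [norm_mul] using mul_le_of_le_one_left (norm_nonneg _) ht
  have h := hasSum_integral_of_summable_integral_norm (fun i => (hgK i).const_mul (f i))
    (.of_nonneg_of_le (fun i => integral_nonneg fun t => norm_nonneg _) hnorm_le
      (hf.mul_right _))
  simp only [integral_const_mul] at h
  simpa only [← mul_assoc, tsum_mul_right] using h

lemma abs_le_one_of_mem_Ioc {t : ℝ} (ht : t ∈ Ioc (0 : ℝ) 1) : |t| ≤ 1 :=
  abs_le.mpr ⟨by linarith [ht.1], ht.2⟩

lemma norm_ofReal_pow_le_one {t : ℝ} (ht : |t| ≤ 1) (n : ℕ) : ‖(t : ℂ) ^ n‖ ≤ 1 := by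
  rw [norm_pow, norm_real, Real.norm_eq_abs]
  exact pow_le_one₀ (abs_nonneg t) ht

lemma norm_mul_ofReal_lt_one {z : ℂ} (hz : ‖z‖ < 1) {t : ℝ} (ht : |t| ≤ 1) : ‖z * t‖ < 1 := by
  rw [norm_mul, norm_real, Real.norm_eq_abs]
  exact (mul_le_of_le_one_right (norm_nonneg _) ht).trans_lt hz

theorem hasSum_binomialTerm_mul_binomialTerm_mul_pow (b₁ b₂ : ℂ) {x y : ℂ} (hx : ‖x‖ < 1)
    (hy : ‖y‖ < 1) {t : ℝ} (ht : |t| ≤ 1) :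
    HasSum (fun p : ℕ × ℕ => binomialTerm b₁ x p.1 * binomialTerm b₂ y p.2 * (t : ℂ) ^ (p.1 + p.2))
      ((1 - x * t) ^ (-b₁) * (1 - y * t) ^ (-b₂)) := by
  refine (hasSum_binomialTerm_mul_binomialTerm b₁ b₂ (norm_mul_ofReal_lt_one hx ht)
    (norm_mul_ofReal_lt_one hy ht)).congr_fun fun p => ?_
  rw [binomialTerm_mul, binomialTerm_mul, pow_add]
  ring

/-- Euler integral representation of the first Appell hypergeometric function:
for `Re c > Re a > 0`, `|x| < 1`, `|y| < 1`,
`F₁(a,b₁,b₂;c;x,y) = Γ(c)/(Γ(a)Γ(c-a)) ∫₀¹ t^(a-1)(1-t)^(c-a-1)(1-xt)^(-b₁)(1-yt)^(-b₂) dt`. -/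
theorem appellF1_euler_integral
    (a b₁ b₂ c : ℂ) (ha : 0 < a.re) (hca : a.re < c.re)
    (x y : ℂ) (hx : ‖x‖ < 1) (hy : ‖y‖ < 1) :
    ∑' k : ℕ, ∑' l : ℕ,
        (Polynomial.eval a (ascPochhammer ℂ (k + l)) *
            Polynomial.eval b₁ (ascPochhammer ℂ k) *
            Polynomial.eval b₂ (ascPochhammer ℂ l)) /
          (Polynomial.eval c (ascPochhammer ℂ (k + l)) *
            (Nat.factorial k : ℂ) * (Nat.factorial l : ℂ)) * x ^ k * y ^ l =
      Complex.Gamma c / (Complex.Gamma a * Complex.Gamma (c - a)) *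
        ∫ t in (0:ℝ)..1,
          (t : ℂ) ^ (a - 1) * ((1 : ℂ) - (t : ℂ)) ^ (c - a - 1) *
            ((1 : ℂ) - x * (t : ℂ)) ^ (-b₁) * ((1 : ℂ) - y * (t : ℂ)) ^ (-b₂) := by
  set C := Gamma c / (Gamma a * Gamma (c - a))
  set K : ℝ → ℂ := fun t => (t : ℂ) ^ (a - 1) * (1 - (t : ℂ)) ^ (c - a - 1)
  set μ := volume.restrict (Ioc (0 : ℝ) 1)
  set f : ℕ × ℕ → ℂ := fun p => binomialTerm b₁ x p.1 * binomialTerm b₂ y p.2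
  have hK : Integrable K μ := (intervalIntegrable_iff_integrableOn_Ioc_of_le zero_le_one).mp
    (betaIntegral_convergent ha (by simpa using hca))
  have hg_le : ∀ p : ℕ × ℕ, ∀ᵐ t : ℝ ∂μ, ‖(t : ℂ) ^ (p.1 + p.2)‖ ≤ 1 := fun p =>
    (ae_restrict_mem measurableSet_Ioc).mono fun t ht =>
      norm_ofReal_pow_le_one (abs_le_one_of_mem_Ioc ht) _
  have hsum := hasSum_mul_integral_of_norm_le_one hK (fun p => by fun_prop) hg_le
    ((summable_norm_binomialTerm b₁ hx).mul_norm (summable_norm_binomialTerm b₂ hy))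
  have hpointwise : ∀ t ∈ Ioc (0 : ℝ) 1, (∑' p, f p * (t : ℂ) ^ (p.1 + p.2)) * K t =
      K t * (1 - x * t) ^ (-b₁) * (1 - y * t) ^ (-b₂) := fun t ht => by
    rw [(hasSum_binomialTerm_mul_binomialTerm_mul_pow b₁ b₂ hx hy
      (abs_le_one_of_mem_Ioc ht)).tsum_eq]
    ring
  rw [setIntegral_congr_fun measurableSet_Ioc hpointwise] at hsum
  have hsummable := hsum.summable.mul_left C
  calc _ = ∑' k : ℕ, ∑' l : ℕ, C * (f (k, l) * ∫ t, (t : ℂ) ^ (k + l) * K t ∂μ) := by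
        refine tsum_congr fun k => tsum_congr fun l => ?_
        rw [← betaIntegral_add_nat, mul_left_comm,
          ← ascPochhammer_eval_div_eq_betaIntegral ha hca]
        simp only [f, binomialTerm]
        ring
    _ = ∑' p : ℕ × ℕ, C * (f p * ∫ t, (t : ℂ) ^ (p.1 + p.2) * K t ∂μ) :=
        (hsummable.tsum_prod' hsummable.prod_factor).symm
    _ = _ := by
        rw [tsum_mul_left, hsum.tsum_eq, intervalIntegral.integral_of_le zero_le_one]
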